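/- Let f : ℝ² → ℝ be f(x,y) = c₁ x + c₂ y with c₁ ≤ 0 and c₂ > 0, and let 𝒫 = {P(θ) : θ ∈ [θ̲,θ̄]} be the two-bus flow arc with −arctan(b/g) < θ̲ ≤ θ̄ < arctan(b/g). Then the unique minimizer of f over conv(𝒫) is P(θ̄), the endpoint of the arc maximizing the first coordinate (the 'lower-right corner'). -/

import Mathlib

/-!
Along the arc `P₁` increases and `P₂` decreases: their derivatives are `±V₁V₂(b cos θ ± g sin θ)`,
and `|g sin θ| < b cos θ` because `|tan θ| < b / g`. Hence the objective `c₁P₁ + c₂P₂` is strictly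
decreasing, so `P(θ̄)` is its strict minimizer on the arc. A strict minimizer `p` of a linear
functional `f` on a set stays one on the convex hull, since that hull lies in the convex join of
`p` with the open half-space `{f > f p}`.
-/

open Real Set

section ConvexHull

variable {𝕜 E : Type*} [Field 𝕜] [LinearOrder 𝕜] [IsStrictOrderedRing 𝕜]
  [AddCommGroup E] [Module 𝕜 E]

theorem lt_apply_of_mem_convexHull {f : E →ₗ[𝕜] 𝕜} {s : Set E} {p x : E}
    (h : ∀ y ∈ s, y ≠ p → f p < f y) (hx : x ∈ convexHull 𝕜 s) (hxp : x ≠ p) : f p < f x := by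
  set t := {y | f p < f y}
  have hst : s ⊆ insert p t := fun y hy => or_iff_not_imp_left.2 (h y hy)
  rcases t.eq_empty_or_nonempty with ht | ht
  · rw [ht, insert_empty_eq] at hst
    exact absurd (convexHull_min hst (convex_singleton p) hx) hxp
  have hx' := convexHull_mono hst hx
  rw [convexHull_insert ht, (convex_halfSpace_gt f.isLinear _).convexHull_eq] at hx'
  obtain ⟨_, rfl, y, hy, hxy⟩ := mem_convexJoin.1 hx'
  obtain rfl | hyx := eq_or_ne x y
  · exact hy
  have := mem_image_of_mem f.toAffineMap (mem_openSegment_of_ne_left_right hxp.symm hyx.symm hxy)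
  rw [image_openSegment, LinearMap.coe_toAffineMap, openSegment_eq_Ioo hy] at this
  exact this.1

end ConvexHull

theorem sin_lt_mul_cos_of_lt_arctan {r θ : ℝ} (h₁ : -(π / 2) < θ) (h₂ : θ < arctan r) :
    sin θ < r * cos θ := by
  have hcos : 0 < cos θ := cos_pos_of_mem_Ioo ⟨h₁, h₂.trans (arctan_lt_pi_div_two r)⟩
  have htan := tan_lt_tan_of_lt_of_lt_pi_div_two h₁ (arctan_lt_pi_div_two r) h₂
  rwa [tan_arctan, tan_eq_sin_div_cos, div_lt_iff₀ hcos] at htan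

theorem abs_sin_lt_mul_cos_of_mem_Ioo_arctan {r θ : ℝ} (hθ : θ ∈ Ioo (-arctan r) (arctan r)) :
    |sin θ| < r * cos θ := by
  have hπ := arctan_lt_pi_div_two r
  have hpos := sin_lt_mul_cos_of_lt_arctan (by linarith [hθ.1]) hθ.2
  have hneg := sin_lt_mul_cos_of_lt_arctan (θ := -θ) (by linarith [hθ.2]) (by linarith [hθ.1])
  rw [sin_neg, cos_neg] at hneg
  exact abs_lt.2 ⟨by linarith, hpos⟩

section FlowArc

variable {g b V1 V2 : ℝ}

theorem abs_mul_sin_lt_mul_cos (hg : 0 < g) {θ : ℝ}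
    (hθ : θ ∈ Ioo (-arctan (b / g)) (arctan (b / g))) : |g * sin θ| < b * cos θ := by
  have := mul_lt_mul_of_pos_left (abs_sin_lt_mul_cos_of_mem_Ioo_arctan hθ) hg
  rwa [← abs_of_pos hg, ← abs_mul, abs_of_pos hg, ← mul_assoc, mul_div_cancel₀ b hg.ne'] at this

theorem strictMonoOn_flow_fst (hg : 0 < g) (hV1 : 0 < V1) (hV2 : 0 < V2) :
    StrictMonoOn (fun θ => V1 ^ 2 * g + V1 * V2 * (b * sin θ - g * cos θ))
      (Ioo (-arctan (b / g)) (arctan (b / g))) := by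
  refine strictMonoOn_of_deriv_pos (convex_Ioo _ _) (by fun_prop) fun θ hθ => ?_
  rw [interior_Ioo] at hθ
  have hderiv : deriv (fun θ => V1 ^ 2 * g + V1 * V2 * (b * sin θ - g * cos θ)) θ
      = V1 * V2 * (b * cos θ + g * sin θ) := by simp
  rw [hderiv]
  have hbound := abs_mul_sin_lt_mul_cos hg hθ
  have hsin := neg_abs_le (g * sin θ)
  exact mul_pos (mul_pos hV1 hV2) (by linarith)

theorem strictAntiOn_flow_snd (hg : 0 < g) (hV1 : 0 < V1) (hV2 : 0 < V2) :
    StrictAntiOn (fun θ => V2 ^ 2 * g - V1 * V2 * (b * sin θ + g * cos θ))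
      (Ioo (-arctan (b / g)) (arctan (b / g))) := by
  refine strictAntiOn_of_deriv_neg (convex_Ioo _ _) (by fun_prop) fun θ hθ => ?_
  rw [interior_Ioo] at hθ
  have hderiv : deriv (fun θ => V2 ^ 2 * g - V1 * V2 * (b * sin θ + g * cos θ)) θ
      = -(V1 * V2 * (b * cos θ - g * sin θ)) := by simp [sub_eq_add_neg]
  rw [hderiv, neg_neg_iff_pos]
  have hbound := abs_mul_sin_lt_mul_cos hg hθ
  have hsin := le_abs_self (g * sin θ)
  exact mul_pos (mul_pos hV1 hV2) (by linarith)

end FlowArc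

theorem lower_right_corner_minimizes_general
    (g b V1 V2 θlo θhi c1 c2 : ℝ) (hg : 0 < g)
    (hV1 : 0 < V1) (hV2 : 0 < V2)
    (hlo : -Real.arctan (b / g) < θlo) (hle : θlo ≤ θhi)
    (hhi : θhi < Real.arctan (b / g))
    (hc1 : c1 ≤ 0) (hc2 : 0 < c2)
    (P : ℝ → ℝ × ℝ)
    (hP : ∀ θ, P θ = (V1 ^ 2 * g + V1 * V2 * (b * Real.sin θ - g * Real.cos θ),
                      V2 ^ 2 * g - V1 * V2 * (b * Real.sin θ + g * Real.cos θ))) :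
    P θhi ∈ convexHull ℝ (P '' Set.Icc θlo θhi) ∧
    ∀ x ∈ convexHull ℝ (P '' Set.Icc θlo θhi), x ≠ P θhi →
      c1 * (P θhi).1 + c2 * (P θhi).2 < c1 * x.1 + c2 * x.2 := by
  have hθhi : θhi ∈ Icc θlo θhi := ⟨hle, le_rfl⟩
  have harc : Icc θlo θhi ⊆ Ioo (-arctan (b / g)) (arctan (b / g)) :=
    Icc_subset_Ioo hlo hhi
  refine ⟨subset_convexHull ℝ _ ⟨θhi, hθhi, rfl⟩, fun x hx hne => ?_⟩
  let L : ℝ × ℝ →ₗ[ℝ] ℝ := c1 • LinearMap.fst ℝ ℝ ℝ + c2 • LinearMap.snd ℝ ℝ ℝ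
  refine lt_apply_of_mem_convexHull (f := L) ?_ hx hne
  rintro _ ⟨θ, hθ, rfl⟩ hθne
  have hlt : θ < θhi := hθ.2.lt_of_ne (by rintro rfl; exact hθne rfl)
  have h1 := strictMonoOn_flow_fst hg hV1 hV2 (harc hθ) (harc hθhi) hlt
  have h2 := strictAntiOn_flow_snd hg hV1 hV2 (harc hθ) (harc hθhi) hlt
  simp only [L, hP, LinearMap.add_apply, LinearMap.smul_apply, LinearMap.fst_apply,
    LinearMap.snd_apply, smul_eq_mul] at h1 h2 ⊢
  linarith [mul_le_mul_of_nonpos_left h1.le hc1, mul_lt_mul_of_pos_left h2 hc2]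

theorem lower_right_corner_minimizes
    (g b V1 V2 θlo θhi c1 c2 : ℝ) (hg : 0 < g) (hb : 0 < b)
    (hV1 : 0 < V1) (hV2 : 0 < V2)
    (hlo : -Real.arctan (b / g) < θlo) (hle : θlo ≤ θhi)
    (hhi : θhi < Real.arctan (b / g))
    (hc1 : c1 ≤ 0) (hc2 : 0 < c2)
    (P : ℝ → ℝ × ℝ)
    (hP : ∀ θ, P θ = (V1 ^ 2 * g + V1 * V2 * (b * Real.sin θ - g * Real.cos θ),
                      V2 ^ 2 * g - V1 * V2 * (b * Real.sin θ + g * Real.cos θ))) :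
    P θhi ∈ convexHull ℝ (P '' Set.Icc θlo θhi) ∧
    ∀ x ∈ convexHull ℝ (P '' Set.Icc θlo θhi), x ≠ P θhi →
      c1 * (P θhi).1 + c2 * (P θhi).2 < c1 * x.1 + c2 * x.2 :=
  lower_right_corner_minimizes_general g b V1 V2 θlo θhi c1 c2 hg hV1 hV2 hlo hle hhi hc1 hc2 P hP
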